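/- (Corollary to Theorem 2.4, q-case: covariance for the negative q-trinomial distribution of the second kind.) Let n ≥ 1 be a natural number and β₁, β₂ ∈ (0,1). Define the convergent double series A := ∑_{(v₁,v₂)∈ℕ×ℕ} (1 − β₁·q^{n+v₂})·[v₁]_q·[v₂]_q·v(v₁,v₂), B := ∑_{(v₁,v₂)∈ℕ×ℕ} (1 − β₁·q^{n+v₂})·[v₁]_q·v(v₁,v₂), and C := ∑_{(v₁,v₂)∈ℕ×ℕ} [v₂]_q·v(v₁,v₂). Then A − B·C = ( [n]_q·β₁·β₂ / (1 − β₂·q^{n}) ) · ( [n+1]_q/(1 − β₂·q^{n+1}) − [n]_q/(1 − β₂·q^{n}) ). -/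

import Mathlib

/-!
Write `n = m + 1` and let `N_l(β; ·)` be the negative `q`-binomial distribution with `l + 1`
successes, `N_l(β; v) = C_q(l + v, v) β^v ⟨1 ⊖ β⟩_{l+1}`; it is normalised by the `q`-binomial
series `∑_v C_q(l + v, v) β^v = 1 / ⟨1 ⊖ β⟩_{l+1}`, proved by induction on `l` through the
`q`-Pascal rule, which exhibits the series for `l + 1` as a Cauchy product of the series for `l`
(at `qβ`) with a geometric series. The pmf factors as `v(v₁, v₂) = N_{m+v₂}(β₁; v₁) N_m(β₂; v₂)`,
so summing over `v₁` first reduces `A`, `B`, `C` to moments of `[v₂]_q` under `N_m(β₂)`: the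
factor `1 - β₁ q^{n+v₂}` cancels the denominator of the conditional mean of `[v₁]_q`, and
`[n + v₂]_q = [n]_q + q^n [v₂]_q`. The moments come from the size-bias identity
`[v]_q C_q(l + v, v) = [l + 1]_q C_q(l + v, v - 1)`, which turns `N_l` into `N_{l+1}`.
-/

open Finset

/-- q-integer `[k]_q = (1 - q^k)/(1 - q)`. -/
noncomputable def qInt (q : ℝ) (k : ℤ) : ℝ := (1 - q ^ k) / (1 - q)

/-- q-factorial `[n]_q! = ∏_{i=1}^n [i]_q`. -/
noncomputable def qFact (q : ℝ) (n : ℕ) : ℝ := ∏ i ∈ Finset.Icc 1 n, qInt q (i : ℤ)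

/-- q-binomial coefficient `C_q(n,k)`. -/
noncomputable def qBinom (q : ℝ) (n k : ℕ) : ℝ := qFact q n / (qFact q k * qFact q (n - k))

/-- q-falling factorial `[u]_{m,q} = ∏_{i=1}^m [u-i+1]_q`. -/
noncomputable def qFall (q : ℝ) (u : ℤ) (m : ℕ) : ℝ := ∏ i ∈ Finset.Icc 1 m, qInt q (u - (i : ℤ) + 1)

/-- `[k]_{q⁻¹} = q^{1-k} · [k]_q`. -/
noncomputable def qIntInv (q : ℝ) (k : ℤ) : ℝ := q ^ (1 - k) * qInt q k

/-- `[u]_{m,q⁻¹} = ∏_{i=1}^m [u-i+1]_{q⁻¹}`. -/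
noncomputable def qFallInv (q : ℝ) (u : ℤ) (m : ℕ) : ℝ := ∏ i ∈ Finset.Icc 1 m, qIntInv q (u - (i : ℤ) + 1)

/-- `b(k) = k(k-1)/2`. -/
def bb (k : ℕ) : ℕ := k * (k - 1) / 2

/-- `⟨1 ⊕ α⟩_m = ∏_{i=1}^m (1 + α q^{i-1})`. -/
noncomputable def oplus (q α : ℝ) (m : ℕ) : ℝ := ∏ i ∈ Finset.Icc 1 m, (1 + α * q ^ (i - 1))

/-- `⟨1 ⊖ β⟩_m = ∏_{i=1}^m (1 - β q^{i-1})`. -/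
noncomputable def ominus (q β : ℝ) (m : ℕ) : ℝ := ∏ i ∈ Finset.Icc 1 m, (1 - β * q ^ (i - 1))

/-- q-trinomial coefficient `T_q(n; x₁, x₂)`. -/
noncomputable def qTri (q : ℝ) (n x1 x2 : ℕ) : ℝ :=
  qFact q n / (qFact q x1 * qFact q x2 * qFact q (n - x1 - x2))

/-- pmf of the negative q-trinomial distribution of the second kind. -/
noncomputable def vpmf (q b1 b2 : ℝ) (n v1 v2 : ℕ) : ℝ :=
  (qFact q (n + v1 + v2 - 1) / (qFact q v1 * qFact q v2 * qFact q (n - 1))) *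
    b1 ^ v1 * b2 ^ v2 * ominus q b1 (n + v2) * ominus q b2 n

section QAnalogues

variable {q : ℝ}

lemma qInt_natCast (k : ℕ) : qInt q k = (1 - q ^ k) / (1 - q) := by
  simp [qInt]

lemma qInt_zero : qInt q 0 = 0 := by
  simp [qInt]

lemma qInt_add (hq : q ≠ 1) (a b : ℕ) :
    qInt q ((a + b : ℕ) : ℤ) = qInt q a + q ^ a * qInt q b := by
  have : 1 - q ≠ 0 := sub_ne_zero.mpr hq.symm
  simp only [qInt_natCast]
  field_simp
  ring

lemma qInt_succ (hq : q ≠ 1) (k : ℕ) : qInt q ((k + 1 : ℕ) : ℤ) = 1 + q * qInt q k := by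
  have : 1 - q ≠ 0 := sub_ne_zero.mpr hq.symm
  simp only [qInt_natCast]
  field_simp
  ring

lemma qInt_ne_zero (hq : |q| < 1) {k : ℕ} (hk : k ≠ 0) : qInt q k ≠ 0 := by
  have hqk : |q ^ k| < 1 := by rw [abs_pow]; exact pow_lt_one₀ (abs_nonneg q) hq hk
  have hq1 : 1 - q ≠ 0 := by linarith [le_abs_self q]
  rw [qInt_natCast]
  exact div_ne_zero (by linarith [le_abs_self (q ^ k)]) hq1

lemma qInt_nonneg (hq0 : 0 ≤ q) (hq1 : q < 1) (k : ℕ) : 0 ≤ qInt q k := by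
  rw [qInt_natCast]
  exact div_nonneg (by linarith [pow_le_one₀ hq0 hq1.le (n := k)]) (by linarith)

lemma qFact_zero : qFact q 0 = 1 := by
  simp [qFact]

lemma qFact_succ (m : ℕ) : qFact q (m + 1) = qFact q m * qInt q ((m + 1 : ℕ) : ℤ) :=
  prod_Icc_succ_top (by omega) _

lemma qFact_ne_zero (hq : |q| < 1) (m : ℕ) : qFact q m ≠ 0 :=
  prod_ne_zero_iff.mpr fun i hi => qInt_ne_zero hq (by grind)

lemma qFact_nonneg (hq0 : 0 ≤ q) (hq1 : q < 1) (m : ℕ) : 0 ≤ qFact q m :=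
  prod_nonneg fun i _ => qInt_nonneg hq0 hq1 i

lemma qBinom_add_left (l v : ℕ) :
    qBinom q (l + v) v = qFact q (l + v) / (qFact q v * qFact q l) := by
  rw [qBinom, Nat.add_sub_cancel]

lemma qBinom_zero_right (hq : |q| < 1) (l : ℕ) : qBinom q l 0 = 1 := by
  rw [qBinom, Nat.sub_zero, qFact_zero, one_mul, div_self (qFact_ne_zero hq l)]

lemma qBinom_self (hq : |q| < 1) (v : ℕ) : qBinom q v v = 1 := by
  rw [qBinom, Nat.sub_self, qFact_zero, mul_one, div_self (qFact_ne_zero hq v)]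

lemma qBinom_pascal (hq : |q| < 1) (l v : ℕ) :
    qBinom q (l + 1 + (v + 1)) (v + 1) =
      qBinom q (l + 1 + v) v + q ^ (v + 1) * qBinom q (l + (v + 1)) (v + 1) := by
  have hq1 : q ≠ 1 := by rintro rfl; norm_num at hq
  simp only [qBinom_add_left]
  rw [show l + 1 + (v + 1) = l + 1 + v + 1 by omega, show l + (v + 1) = l + 1 + v by omega,
    qFact_succ (l + 1 + v), qFact_succ v, qFact_succ l,
    show l + 1 + v + 1 = (v + 1) + (l + 1) by omega, qInt_add hq1 (v + 1) (l + 1)]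
  have := qFact_ne_zero hq v
  have := qFact_ne_zero hq l
  have := qInt_ne_zero hq (k := v + 1) (by omega)
  have := qInt_ne_zero hq (k := l + 1) (by omega)
  field_simp

lemma qInt_mul_qBinom (hq : |q| < 1) (l v : ℕ) :
    qInt q ((v + 1 : ℕ) : ℤ) * qBinom q (l + (v + 1)) (v + 1) =
      qInt q ((l + 1 : ℕ) : ℤ) * qBinom q (l + 1 + v) v := by
  simp only [qBinom_add_left]
  rw [show l + (v + 1) = l + 1 + v by omega, qFact_succ v, qFact_succ l]
  have := qFact_ne_zero hq v
  have := qFact_ne_zero hq l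
  have := qInt_ne_zero hq (k := v + 1) (by omega)
  have := qInt_ne_zero hq (k := l + 1) (by omega)
  field_simp

variable {β : ℝ}

lemma ominus_succ (m : ℕ) : ominus q β (m + 1) = ominus q β m * (1 - β * q ^ m) := by
  rw [ominus, prod_Icc_succ_top (by omega), Nat.add_sub_cancel]
  rfl

lemma ominus_succ' (m : ℕ) : ominus q β (m + 1) = (1 - β) * ominus q (q * β) m := by
  induction m with
  | zero => simp [ominus]
  | succ m ih => rw [ominus_succ, ih, ominus_succ (β := q * β) m]; ring

lemma one_sub_mul_pow_ne_zero (hq : |q| ≤ 1) (hβ : |β| < 1) (m : ℕ) : 1 - β * q ^ m ≠ 0 := by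
  have : |β * q ^ m| < 1 := by
    rw [abs_mul, abs_pow]
    exact lt_of_le_of_lt (mul_le_of_le_one_right (abs_nonneg β) (pow_le_one₀ (abs_nonneg q) hq)) hβ
  linarith [le_abs_self (β * q ^ m)]

lemma ominus_ne_zero (hq : |q| ≤ 1) (hβ : |β| < 1) (m : ℕ) : ominus q β m ≠ 0 :=
  prod_ne_zero_iff.mpr fun i _ => one_sub_mul_pow_ne_zero hq hβ (i - 1)

lemma one_sub_mul_pow_nonneg (hq0 : 0 ≤ q) (hq1 : q ≤ 1) (hβ : β ≤ 1) (m : ℕ) :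
    0 ≤ 1 - β * q ^ m := by
  have := pow_le_one₀ hq0 hq1 (n := m)
  have := pow_nonneg hq0 m
  nlinarith

lemma ominus_nonneg (hq0 : 0 ≤ q) (hq1 : q ≤ 1) (hβ : β ≤ 1) (m : ℕ) : 0 ≤ ominus q β m :=
  prod_nonneg fun i _ => one_sub_mul_pow_nonneg hq0 hq1 hβ (i - 1)

end QAnalogues

lemma hasSum_of_succ_eq_mul_add {g h : ℕ → ℝ} {β s : ℝ} (hβ : |β| < 1) (hh : HasSum h s)
    (h0 : g 0 = h 0) (hsucc : ∀ v, g (v + 1) = β * g v + h (v + 1)) :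
    HasSum g (s / (1 - β)) := by
  have hg : g = fun v => ∑ k ∈ range (v + 1), β ^ k * h (v - k) := by
    funext v
    induction v with
    | zero => simp [h0]
    | succ v ih =>
      rw [hsucc, ih, sum_range_succ' _ (v + 1), mul_sum]
      simp only [Nat.add_sub_add_right, pow_succ', pow_zero, one_mul, Nat.sub_zero, mul_assoc]
  have hgeom : Summable fun k => ‖β ^ k‖ := by
    simpa [norm_pow] using summable_geometric_of_lt_one (abs_nonneg β) hβ
  have hsum := hasSum_sum_range_mul_of_summable_norm hgeom (by simpa using hh.summable.abs)
  rw [tsum_geometric_of_abs_lt_one hβ, hh.tsum_eq] at hsum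
  rw [hg, div_eq_inv_mul]
  exact hsum

lemma hasSum_qBinom_mul_pow {q : ℝ} (hq : |q| < 1) (l : ℕ) {β : ℝ} (hβ : |β| < 1) :
    HasSum (fun v => qBinom q (l + v) v * β ^ v) (ominus q β (l + 1))⁻¹ := by
  induction l generalizing β with
  | zero =>
    simpa [qBinom_self hq, ominus_succ, ominus] using
      hasSum_geometric_of_abs_lt_one hβ
  | succ l ih =>
    have hqβ : |q * β| < 1 := by
      rw [abs_mul]; exact lt_of_le_of_lt (mul_le_of_le_one_left (abs_nonneg β) hq.le) hβ
    have := hasSum_of_succ_eq_mul_add (g := fun v => qBinom q (l + 1 + v) v * β ^ v) hβ (ih hqβ)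
      (by simp [qBinom_zero_right hq])
      fun v => by rw [qBinom_pascal hq, mul_pow]; ring
    rwa [ominus_succ' (l + 1), mul_inv, ← div_eq_inv_mul]

/-- The negative `q`-binomial distribution of the second kind with `l + 1` successes. -/
noncomputable def negQBinom (q β : ℝ) (l v : ℕ) : ℝ :=
  qBinom q (l + v) v * β ^ v * ominus q β (l + 1)

noncomputable def negQBinomMean (q β : ℝ) (l : ℕ) : ℝ :=
  qInt q ((l + 1 : ℕ) : ℤ) * β / (1 - β * q ^ (l + 1))

section NegQBinom

variable {q β : ℝ}

lemma negQBinom_nonneg (hq0 : 0 ≤ q) (hq1 : q < 1) (hβ0 : 0 ≤ β) (hβ1 : β < 1) (l v : ℕ) :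
    0 ≤ negQBinom q β l v := by
  unfold negQBinom qBinom
  have := ominus_nonneg hq0 hq1.le hβ1.le (l + 1)
  have := qFact_nonneg hq0 hq1 (l + v)
  have := qFact_nonneg hq0 hq1 v
  have := qFact_nonneg hq0 hq1 (l + v - v)
  positivity

lemma hasSum_negQBinom (hq : |q| < 1) (hβ : |β| < 1) (l : ℕ) : HasSum (negQBinom q β l) 1 := by
  have := (hasSum_qBinom_mul_pow hq l hβ).mul_right (ominus q β (l + 1))
  rwa [inv_mul_cancel₀ (ominus_ne_zero hq.le hβ _)] at this

lemma hasSum_qInt_mul_mul_negQBinom (hq : |q| < 1) (hβ : |β| < 1) {l : ℕ} {f : ℕ → ℝ} {s : ℝ}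
    (hf : HasSum (fun u => f (u + 1) * negQBinom q β (l + 1) u) s) :
    HasSum (fun v : ℕ => qInt q v * f v * negQBinom q β l v) (negQBinomMean q β l * s) := by
  refine (hasSum_nat_add_iff' 1).mp ?_
  rw [sum_range_one, Nat.cast_zero, qInt_zero, zero_mul, zero_mul, sub_zero]
  refine (hf.mul_left (negQBinomMean q β l)).congr_fun fun u => ?_
  have hshift := qInt_mul_qBinom hq l u
  rw [← add_assoc] at hshift
  have := one_sub_mul_pow_ne_zero hq.le hβ (l + 1)
  simp only [negQBinom, negQBinomMean, ominus_succ (l + 1)]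
  rw [div_mul_eq_mul_div, eq_div_iff this]
  linear_combination (f (u + 1) * β ^ u * β * ominus q β (l + 1) * (1 - β * q ^ (l + 1))) * hshift

lemma hasSum_qInt_mul_negQBinom (hq : |q| < 1) (hβ : |β| < 1) (l : ℕ) :
    HasSum (fun v : ℕ => qInt q v * negQBinom q β l v) (negQBinomMean q β l) := by
  have := hasSum_qInt_mul_mul_negQBinom (f := fun _ => 1) hq hβ
    ((hasSum_negQBinom hq hβ (l + 1)).congr_fun fun u => one_mul _)
  simpa only [mul_one] using this

lemma hasSum_qInt_sq_mul_negQBinom (hq : |q| < 1) (hβ : |β| < 1) (l : ℕ) :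
    HasSum (fun v : ℕ => qInt q v ^ 2 * negQBinom q β l v)
      (negQBinomMean q β l * (1 + q * negQBinomMean q β (l + 1))) := by
  have hq1 : q ≠ 1 := by rintro rfl; norm_num at hq
  have hsucc := (hasSum_negQBinom hq hβ (l + 1)).add
    ((hasSum_qInt_mul_negQBinom hq hβ (l + 1)).mul_left q)
  refine (hasSum_qInt_mul_mul_negQBinom (f := fun v : ℕ => qInt q v) hq hβ
    (hsucc.congr_fun fun u => ?_)).congr_fun fun v => by ring
  rw [qInt_succ hq1]
  ring

lemma hasSum_one_sub_mul_qInt_mul_negQBinom (hq : |q| < 1) (hβ : |β| < 1) (l : ℕ) :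
    HasSum (fun v : ℕ => (1 - β * q ^ (l + 1)) * qInt q v * negQBinom q β l v)
      (qInt q ((l + 1 : ℕ) : ℤ) * β) := by
  have := (hasSum_qInt_mul_negQBinom hq hβ l).mul_left (1 - β * q ^ (l + 1))
  rw [negQBinomMean, mul_div_cancel₀ _ (one_sub_mul_pow_ne_zero hq.le hβ _)] at this
  exact this.congr_fun fun v => by ring

end NegQBinom

lemma HasSum.of_fiberwise_of_nonneg {α β : Type*} {f : α × β → ℝ} (hf : 0 ≤ f) {g : β → ℝ}
    {s : ℝ} (hfg : ∀ b, HasSum (fun a => f (a, b)) (g b)) (hg : HasSum g s) : HasSum f s := by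
  have hsum : Summable fun p : β × α => f (p.2, p.1) :=
    (summable_prod_of_nonneg (f := fun p : β × α => f (p.2, p.1)) fun _ => hf _).mpr
      ⟨fun b => (hfg b).summable, by simpa [(hfg _).tsum_eq] using hg.summable⟩
  rw [← (Equiv.prodComm β α).hasSum_iff, hg.unique (hsum.hasSum.prod_fiberwise hfg)]
  exact hsum.hasSum

section NegQTrinomial

variable {q β₁ β₂ : ℝ}

lemma vpmf_succ (hq : |q| < 1) (m v₁ v₂ : ℕ) :
    vpmf q β₁ β₂ (m + 1) v₁ v₂ = negQBinom q β₁ (m + v₂) v₁ * negQBinom q β₂ m v₂ := by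
  have := qFact_ne_zero hq m
  have := qFact_ne_zero hq v₁
  have := qFact_ne_zero hq v₂
  have := qFact_ne_zero hq (m + v₂)
  rw [vpmf, negQBinom, negQBinom, qBinom_add_left, qBinom_add_left,
    show m + 1 + v₁ + v₂ - 1 = m + v₂ + v₁ by omega, Nat.add_sub_cancel, add_right_comm m 1 v₂]
  field_simp

lemma hasSum_mul_vpmf (hq0 : 0 ≤ q) (hq1 : q < 1) (hβ₁0 : 0 ≤ β₁) (hβ₁1 : β₁ < 1)
    (hβ₂0 : 0 ≤ β₂) (hβ₂1 : β₂ < 1) {m : ℕ} {φ : ℕ × ℕ → ℝ} (hφ : 0 ≤ φ) {r : ℕ → ℝ} {s : ℝ}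
    (hrow : ∀ v₂, HasSum (fun v₁ => φ (v₁, v₂) * negQBinom q β₁ (m + v₂) v₁) (r v₂))
    (hr : HasSum (fun v₂ => r v₂ * negQBinom q β₂ m v₂) s) :
    HasSum (fun v : ℕ × ℕ => φ v * vpmf q β₁ β₂ (m + 1) v.1 v.2) s := by
  have hq : |q| < 1 := (abs_of_nonneg hq0).trans_lt hq1
  simp only [vpmf_succ hq, ← mul_assoc]
  refine HasSum.of_fiberwise_of_nonneg (fun v => ?_) (fun v₂ => (hrow v₂).mul_right _) hr
  exact mul_nonneg (mul_nonneg (hφ v) (negQBinom_nonneg hq0 hq1 hβ₁0 hβ₁1 _ _))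
    (negQBinom_nonneg hq0 hq1 hβ₂0 hβ₂1 _ _)

lemma hasSum_qInt_snd_mul_vpmf (hq0 : 0 ≤ q) (hq1 : q < 1) (hβ₁0 : 0 ≤ β₁) (hβ₁1 : β₁ < 1)
    (hβ₂0 : 0 ≤ β₂) (hβ₂1 : β₂ < 1) (m : ℕ) :
    HasSum (fun v : ℕ × ℕ => qInt q v.2 * vpmf q β₁ β₂ (m + 1) v.1 v.2)
      (negQBinomMean q β₂ m) := by
  have hq : |q| < 1 := (abs_of_nonneg hq0).trans_lt hq1
  have hβ₁ : |β₁| < 1 := (abs_of_nonneg hβ₁0).trans_lt hβ₁1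
  have hβ₂ : |β₂| < 1 := (abs_of_nonneg hβ₂0).trans_lt hβ₂1
  refine hasSum_mul_vpmf hq0 hq1 hβ₁0 hβ₁1 hβ₂0 hβ₂1 (fun v => qInt_nonneg hq0 hq1 v.2)
    (r := fun v₂ => qInt q v₂) (fun v₂ => ?_) (hasSum_qInt_mul_negQBinom hq hβ₂ m)
  simpa using (hasSum_negQBinom hq hβ₁ (m + v₂)).mul_left (qInt q v₂)

lemma hasSum_one_sub_mul_qInt_fst_mul_vpmf (hq0 : 0 ≤ q) (hq1 : q < 1) (hβ₁0 : 0 ≤ β₁)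
    (hβ₁1 : β₁ < 1) (hβ₂0 : 0 ≤ β₂) (hβ₂1 : β₂ < 1) (m : ℕ) :
    HasSum (fun v : ℕ × ℕ =>
        (1 - β₁ * q ^ (m + 1 + v.2)) * qInt q v.1 * vpmf q β₁ β₂ (m + 1) v.1 v.2)
      (β₁ * (qInt q ((m + 1 : ℕ) : ℤ) + q ^ (m + 1) * negQBinomMean q β₂ m)) := by
  have hq : |q| < 1 := (abs_of_nonneg hq0).trans_lt hq1
  have hβ₁ : |β₁| < 1 := (abs_of_nonneg hβ₁0).trans_lt hβ₁1
  have hβ₂ : |β₂| < 1 := (abs_of_nonneg hβ₂0).trans_lt hβ₂1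
  refine hasSum_mul_vpmf hq0 hq1 hβ₁0 hβ₁1 hβ₂0 hβ₂1
    (fun v => mul_nonneg (one_sub_mul_pow_nonneg hq0 hq1.le hβ₁1.le _) (qInt_nonneg hq0 hq1 v.1))
    (r := fun v₂ => qInt q ((m + 1 + v₂ : ℕ) : ℤ) * β₁) (fun v₂ => ?_) ?_
  · have := hasSum_one_sub_mul_qInt_mul_negQBinom hq hβ₁ (m + v₂)
    rwa [add_right_comm m v₂ 1] at this
  · have := (((hasSum_negQBinom hq hβ₂ m).mul_left (qInt q ((m + 1 : ℕ) : ℤ))).add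
      ((hasSum_qInt_mul_negQBinom hq hβ₂ m).mul_left (q ^ (m + 1)))).mul_left β₁
    rw [mul_one] at this
    refine this.congr_fun fun v₂ => ?_
    rw [qInt_add (by linarith) (m + 1) v₂]
    ring

lemma hasSum_one_sub_mul_qInt_fst_mul_qInt_snd_mul_vpmf (hq0 : 0 ≤ q) (hq1 : q < 1)
    (hβ₁0 : 0 ≤ β₁) (hβ₁1 : β₁ < 1) (hβ₂0 : 0 ≤ β₂) (hβ₂1 : β₂ < 1) (m : ℕ) :
    HasSum (fun v : ℕ × ℕ => (1 - β₁ * q ^ (m + 1 + v.2)) * qInt q v.1 * qInt q v.2 *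
        vpmf q β₁ β₂ (m + 1) v.1 v.2)
      (β₁ * (qInt q ((m + 1 : ℕ) : ℤ) * negQBinomMean q β₂ m +
        q ^ (m + 1) * (negQBinomMean q β₂ m * (1 + q * negQBinomMean q β₂ (m + 1))))) := by
  have hq : |q| < 1 := (abs_of_nonneg hq0).trans_lt hq1
  have hβ₁ : |β₁| < 1 := (abs_of_nonneg hβ₁0).trans_lt hβ₁1
  have hβ₂ : |β₂| < 1 := (abs_of_nonneg hβ₂0).trans_lt hβ₂1
  refine hasSum_mul_vpmf hq0 hq1 hβ₁0 hβ₁1 hβ₂0 hβ₂1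
    (fun v => mul_nonneg (mul_nonneg (one_sub_mul_pow_nonneg hq0 hq1.le hβ₁1.le _)
      (qInt_nonneg hq0 hq1 v.1)) (qInt_nonneg hq0 hq1 v.2))
    (r := fun v₂ => qInt q v₂ * (qInt q ((m + 1 + v₂ : ℕ) : ℤ) * β₁)) (fun v₂ => ?_) ?_
  · have := (hasSum_one_sub_mul_qInt_mul_negQBinom hq hβ₁ (m + v₂)).mul_left (qInt q v₂)
    rw [add_right_comm m v₂ 1] at this
    exact this.congr_fun fun v₁ => by ring
  · have := (((hasSum_qInt_mul_negQBinom hq hβ₂ m).mul_left (qInt q ((m + 1 : ℕ) : ℤ))).add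
      ((hasSum_qInt_sq_mul_negQBinom hq hβ₂ m).mul_left (q ^ (m + 1)))).mul_left β₁
    refine this.congr_fun fun v₂ => ?_
    rw [qInt_add (by linarith) (m + 1) v₂]
    ring

end NegQTrinomial

theorem stmt19 (q : ℝ) (hq0 : 0 < q) (hq1 : q < 1) (n : ℕ) (hn : 1 ≤ n) (β1 β2 : ℝ)
    (hβ1 : 0 < β1) (hβ1' : β1 < 1) (hβ2 : 0 < β2) (hβ2' : β2 < 1) :
    Summable (fun v : ℕ × ℕ =>
        (1 - β1 * q ^ (n + v.2)) * qInt q (v.1 : ℤ) * qInt q (v.2 : ℤ)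
          * vpmf q β1 β2 n v.1 v.2) ∧
    Summable (fun v : ℕ × ℕ =>
        (1 - β1 * q ^ (n + v.2)) * qInt q (v.1 : ℤ) * vpmf q β1 β2 n v.1 v.2) ∧
    Summable (fun v : ℕ × ℕ => qInt q (v.2 : ℤ) * vpmf q β1 β2 n v.1 v.2) ∧
    (∑' v : ℕ × ℕ,
        (1 - β1 * q ^ (n + v.2)) * qInt q (v.1 : ℤ) * qInt q (v.2 : ℤ)
          * vpmf q β1 β2 n v.1 v.2)
      - (∑' v : ℕ × ℕ,
          (1 - β1 * q ^ (n + v.2)) * qInt q (v.1 : ℤ) * vpmf q β1 β2 n v.1 v.2)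
        * (∑' v : ℕ × ℕ, qInt q (v.2 : ℤ) * vpmf q β1 β2 n v.1 v.2)
      = (qInt q (n : ℤ) * β1 * β2 / (1 - β2 * q ^ n)) *
          (qInt q ((n : ℤ) + 1) / (1 - β2 * q ^ (n + 1)) - qInt q (n : ℤ) / (1 - β2 * q ^ n)) := by
  obtain ⟨m, rfl⟩ : ∃ m, n = m + 1 := ⟨n - 1, by omega⟩
  have hA := hasSum_one_sub_mul_qInt_fst_mul_qInt_snd_mul_vpmf hq0.le hq1 hβ1.le hβ1' hβ2.le hβ2' m
  have hB := hasSum_one_sub_mul_qInt_fst_mul_vpmf hq0.le hq1 hβ1.le hβ1' hβ2.le hβ2' m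
  have hC := hasSum_qInt_snd_mul_vpmf hq0.le hq1 hβ1.le hβ1' hβ2.le hβ2' m
  refine ⟨hA.summable, hB.summable, hC.summable, ?_⟩
  rw [hA.tsum_eq, hB.tsum_eq, hC.tsum_eq, ← Nat.cast_succ]
  have hβ₂ : |β2| < 1 := (abs_of_pos hβ2).trans_lt hβ2'
  have hq : |q| ≤ 1 := (abs_of_pos hq0).trans_le hq1.le
  have hD₀ : 1 - q ^ (m + 1) * β2 ≠ 0 := by
    rw [mul_comm]; exact one_sub_mul_pow_ne_zero hq hβ₂ (m + 1)
  have hD₁ : 1 - q ^ (m + 1) * q * β2 ≠ 0 := by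
    rw [← pow_succ, mul_comm]; exact one_sub_mul_pow_ne_zero hq hβ₂ (m + 1 + 1)
  have : 1 - q ≠ 0 := by linarith
  simp only [negQBinomMean, qInt_natCast, pow_succ q (m + 1)]
  generalize q ^ (m + 1) = x at hD₀ hD₁ ⊢
  field_simp
  ring
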